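/- arXiv:1207.1845 — 8 statements merged into one kernel-verified Lean document; each statement's English description precedes it below -/
import Mathlib

section
/- Let p be an odd prime and a, b positive integers with l = gcd(a,b). If a/l is odd and b/l is even, then gcd(p^a + 1, p^b - 1) = p^l + 1. -/
/-- `x^m - 1 ∣ x^n - 1` when `m ∣ n`. -/
lemma aux_pow_sub_one_dvd (x m n : ℕ) (h : m ∣ n) : x ^ m - 1 ∣ x ^ n - 1 := by
  obtain ⟨k, rfl⟩ := h
  simpa only [one_pow, pow_mul] using Nat.sub_dvd_pow_sub_pow (x ^ m) 1 k

/-- gcd of `x^m - 1` and `x^n - 1`. -/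
lemma aux_gcd_pow_sub_one (x : ℕ) (hx : 1 ≤ x) (m n : ℕ) :
    Nat.gcd (x ^ m - 1) (x ^ n - 1) = x ^ Nat.gcd m n - 1 := by
  induction m, n using Nat.gcd.induction with
  | H0 n => simp
  | H1 m n hm ih =>
    conv_rhs => rw [Nat.gcd_rec]
    rw [← ih]
    have hA : 1 ≤ x ^ (m * (n / m)) := Nat.one_le_pow _ _ hx
    have hB : 1 ≤ x ^ (n % m) := Nat.one_le_pow _ _ hx
    have hAB : 1 ≤ x ^ n := Nat.one_le_pow _ _ hx
    have hn : x ^ n = x ^ (m * (n / m)) * x ^ (n % m) := by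
      rw [← pow_add]; congr 1; exact (Nat.div_add_mod n m).symm
    have hn' : (x : ℤ) ^ n = (x : ℤ) ^ (m * (n / m)) * (x : ℤ) ^ (n % m) := by
      exact_mod_cast congrArg (Nat.cast : ℕ → ℤ) hn
    have key : x ^ n - 1 = (x ^ (n % m) - 1) + x ^ (n % m) * (x ^ (m * (n / m)) - 1) := by
      zify [hA, hB, hAB]
      rw [hn']; ring
    obtain ⟨t, ht⟩ : x ^ m - 1 ∣ x ^ (m * (n / m)) - 1 :=
      aux_pow_sub_one_dvd x m _ ⟨n / m, rfl⟩
    rw [key, ht, show x ^ (n % m) * ((x ^ m - 1) * t) = x ^ (n % m) * t * (x ^ m - 1) by ring,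
      Nat.gcd_add_mul_right_right, Nat.gcd_comm]

theorem stmt_0 (p a b l : ℕ) (hp : p.Prime) (hpodd : Odd p)
    (ha : 0 < a) (hb : 0 < b) (hl : l = Nat.gcd a b)
    (h1 : Odd (a / l)) (h2 : Even (b / l)) :
    Nat.gcd (p ^ a + 1) (p ^ b - 1) = p ^ l + 1 := by
  have hl0 : 0 < l := hl ▸ Nat.gcd_pos_of_pos_left _ ha
  have hla : l ∣ a := hl ▸ Nat.gcd_dvd_left a b
  have hlb : l ∣ b := hl ▸ Nat.gcd_dvd_right a b
  set a' := a / l with ha'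
  set b' := b / l with hb'
  have haa : a = l * a' := (Nat.mul_div_cancel' hla).symm
  have hbb : b = l * b' := (Nat.mul_div_cancel' hlb).symm
  set q := p ^ l with hq
  have hq1 : 1 ≤ q := Nat.one_le_pow _ _ hp.pos
  have hqodd : Odd q := hpodd.pow
  have hq2 : q ^ 2 - 1 = (q + 1) * (q - 1) := by
    have hq21 : 1 ≤ q ^ 2 := Nat.one_le_pow _ _ (by omega)
    zify [hq1, hq21]; ring
  have f1 : q + 1 ∣ q ^ 2 - 1 := ⟨q - 1, hq2⟩
  have f3 : ∀ m : ℕ, Even m → q ^ 2 - 1 ∣ q ^ m - 1 := fun m hm =>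
    aux_pow_sub_one_dvd q 2 m hm.two_dvd
  have hpa : p ^ a = q ^ a' := by rw [haa, pow_mul]
  have hpb : p ^ b = q ^ b' := by rw [hbb, pow_mul]
  have ha'1 : 1 ≤ a' := h1.pos
  have hqa1 : 1 ≤ q ^ (a' - 1) := Nat.one_le_pow _ _ (by omega)
  have hsplit : q ^ a' = q * q ^ (a' - 1) := by
    rw [← pow_succ']; congr 1; omega
  have f5 : p ^ a + 1 = q * (q ^ (a' - 1) - 1) + (q + 1) := by
    rw [hpa, hsplit]; zify [hqa1]; ring
  have hev : Even (a' - 1) := by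
    obtain ⟨k, hk⟩ := h1; exact ⟨k, by omega⟩
  have f7 : q ^ 2 - 1 ∣ q ^ (a' - 1) - 1 := f3 _ hev
  -- lower bound
  have hqd1 : q + 1 ∣ p ^ a + 1 := by
    rw [f5]
    exact Nat.dvd_add ((f1.trans f7).mul_left q) dvd_rfl
  have hqd2 : q + 1 ∣ p ^ b - 1 := f1.trans (by rw [hpb]; exact f3 b' h2)
  have hlow : q + 1 ∣ Nat.gcd (p ^ a + 1) (p ^ b - 1) := Nat.dvd_gcd hqd1 hqd2
  -- upper bound
  have hcop : Nat.Coprime a' b' := by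
    rw [ha', hb', hl]
    exact Nat.coprime_div_gcd_div_gcd (hl ▸ hl0)
  obtain ⟨b'', hb''⟩ := h2
  have hgcd2 : Nat.gcd (2 * a) b = 2 * l := by
    have h2a : 2 * a = 2 * l * a' := by rw [haa]; ring
    have h2b : b = 2 * l * b'' := by rw [hbb, hb'']; ring
    rw [h2a, h2b, Nat.gcd_mul_left,
      Nat.Coprime.coprime_dvd_right ⟨2, by omega⟩ hcop, mul_one]
  have hd1 : Nat.gcd (p ^ a + 1) (p ^ b - 1) ∣ q ^ 2 - 1 := by
    have hP1 : 1 ≤ p ^ a := Nat.one_le_pow _ _ hp.pos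
    have hP2 : 1 ≤ (p ^ a) ^ 2 := Nat.one_le_pow _ _ (by omega)
    have h2a : p ^ a + 1 ∣ p ^ (2 * a) - 1 :=
      ⟨p ^ a - 1, by rw [mul_comm 2 a, pow_mul]; zify [hP1, hP2]; ring⟩
    have hdd : Nat.gcd (p ^ a + 1) (p ^ b - 1) ∣ Nat.gcd (p ^ (2 * a) - 1) (p ^ b - 1) :=
      Nat.dvd_gcd ((Nat.gcd_dvd_left _ _).trans h2a) (Nat.gcd_dvd_right _ _)
    rwa [aux_gcd_pow_sub_one p hp.one_lt.le, hgcd2, show p ^ (2 * l) = q ^ 2 by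
      rw [mul_comm, pow_mul]] at hdd
  have hup : Nat.gcd (p ^ a + 1) (p ^ b - 1) ∣ q + 1 := by
    have hdA : Nat.gcd (p ^ a + 1) (p ^ b - 1) ∣ q * (q ^ (a' - 1) - 1) :=
      ((hd1.trans f7)).mul_left q
    have hd := (Nat.gcd_dvd_left (p ^ a + 1) (p ^ b - 1)).trans (dvd_of_eq f5)
    exact (Nat.dvd_add_right hdA).mp hd
  exact Nat.dvd_antisymm hup hlow
end

section
/- Let p be an odd prime and a, b positive integers with l = gcd(a,b). If a/l is even, or if both a/l and b/l are odd, then gcd(p^a + 1, p^b - 1) = 2. -/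
theorem stmt_1 (p a b l : ℕ) (hp : p.Prime) (hpodd : Odd p)
    (ha : 0 < a) (hb : 0 < b) (hl : l = Nat.gcd a b)
    (h : Even (a / l) ∨ (Odd (a / l) ∧ Odd (b / l))) :
    Nat.gcd (p ^ a + 1) (p ^ b - 1) = 2 := by
  have hlpos : 0 < l := hl ▸ Nat.gcd_pos_of_pos_left b ha
  have hla : l ∣ a := hl ▸ Nat.gcd_dvd_left a b
  have hlb : l ∣ b := hl ▸ Nat.gcd_dvd_right a b
  have hcop : Nat.Coprime (a / l) (b / l) := by
    rw [hl]; exact Nat.coprime_div_gcd_div_gcd (hl ▸ hlpos)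
  -- b / l is odd in both cases
  have hbodd : Odd (b / l) := by
    rcases h with he | ⟨_, ho⟩
    · rw [Nat.odd_iff, ← Nat.not_even_iff]
      intro hbe
      have : 2 ∣ Nat.gcd (a / l) (b / l) :=
        Nat.dvd_gcd he.two_dvd hbe.two_dvd
      rw [hcop] at this; omega
    · exact ho
  -- gcd (2a) b = l
  have hkey : Nat.gcd (2 * a) b = l := by
    have h2b : Nat.Coprime 2 (b / l) := by
      exact Nat.coprime_two_left.mpr hbodd
    calc Nat.gcd (2 * a) b = Nat.gcd (2 * (l * (a / l))) (l * (b / l)) := by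
          rw [Nat.mul_div_cancel' hla, Nat.mul_div_cancel' hlb]
      _ = Nat.gcd (l * (2 * (a / l))) (l * (b / l)) := by ring_nf
      _ = l * Nat.gcd (2 * (a / l)) (b / l) := Nat.gcd_mul_left l _ _
      _ = l * Nat.gcd (a / l) (b / l) := by
          rw [Nat.Coprime.gcd_mul_left_cancel _ h2b]
      _ = l := by rw [hcop, mul_one]
  set d := Nat.gcd (p ^ a + 1) (p ^ b - 1) with hd
  have hppos : 0 < p := hp.pos
  have h1le : ∀ n : ℕ, 1 ≤ p ^ n := fun n => Nat.one_le_pow n p hppos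
  -- d divides 2
  have hdvd1 : d ∣ p ^ a + 1 := Nat.gcd_dvd_left _ _
  have hdvd2 : d ∣ p ^ b - 1 := Nat.gcd_dvd_right _ _
  have hd2 : d ∣ 2 := by
    have hpa : ((p : ZMod d)) ^ a = -1 := by
      have := (ZMod.natCast_eq_zero_iff _ _).mpr hdvd1
      push_cast at this
      linear_combination this
    have hpb : ((p : ZMod d)) ^ b = 1 := by
      have := (ZMod.natCast_eq_zero_iff _ _).mpr hdvd2
      rw [Nat.cast_sub (h1le b)] at this
      push_cast at this
      linear_combination this
    have h2a : ((p : ZMod d)) ^ (2 * a) = 1 := by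
      rw [pow_mul']
      rw [hpa]; ring
    have hord : orderOf ((p : ZMod d)) ∣ l := by
      rw [← hkey]
      exact Nat.dvd_gcd (orderOf_dvd_of_pow_eq_one h2a)
        (orderOf_dvd_of_pow_eq_one hpb)
    have hpa1 : ((p : ZMod d)) ^ a = 1 :=
      orderOf_dvd_iff_pow_eq_one.mp (hord.trans hla)
    have : (2 : ZMod d) = 0 := by
      rw [hpa1] at hpa
      linear_combination hpa
    have := (ZMod.natCast_eq_zero_iff 2 d).mp (by exact_mod_cast this)
    exact this
  -- 2 divides d
  have h2d : 2 ∣ d := by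
    apply Nat.dvd_gcd
    · have : Odd (p ^ a) := hpodd.pow
      rw [Nat.odd_iff] at this
      omega
    · have : Odd (p ^ b) := hpodd.pow
      rw [Nat.odd_iff] at this
      have := h1le b
      omega
  exact Nat.dvd_antisymm hd2 h2d
end

section
/- Let q be an odd prime power with q ≡ 1 (mod 4). In the finite field F_q, the number of elements x such that both x and x+1 are nonzero squares equals (q-5)/4. -/
open Finset

theorem stmt_3 (q : ℕ) (F : Type*) [Field F] [Fintype F]
    (hq : Fintype.card F = q) (hodd : Odd q) (h4 : q % 4 = 1) :
    Nat.card {x : F // (x ≠ 0 ∧ IsSquare x) ∧ (x + 1 ≠ 0 ∧ IsSquare (x + 1))} =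
      (q - 5) / 4 := by
  classical
  have hchar : ringChar F ≠ 2 := by
    intro h
    have := FiniteField.even_card_of_char_two h
    rw [hq] at this
    omega
  have h2 : (2 : F) ≠ 0 := Ring.two_ne_zero hchar
  have hm1 : (-1 : F) ≠ 1 := Ring.neg_one_ne_one_of_char_ne_two hchar
  have hne : ∀ a : F, a ≠ 0 → a ≠ -a := by
    intro a ha h
    have h2a : (2 : F) * a = 0 := by linear_combination h
    rcases mul_eq_zero.mp h2a with h' | h'
    · exact h2 h'
    · exact ha h'
  obtain ⟨i, hi⟩ : IsSquare (-1 : F) := by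
    apply FiniteField.isSquare_neg_one_iff.mpr
    rw [hq]; omega
  have hi2 : i * i = -1 := hi.symm
  have hine : i ≠ 0 := by
    intro h
    rw [h, mul_zero] at hi2
    exact one_ne_zero (neg_eq_zero.mp hi2.symm)
  -- the hyperbola a² - b² = 1 has q - 1 points
  set A : Finset (F × F) := univ.filter (fun p => p.1 ^ 2 - p.2 ^ 2 = 1) with hA_def
  have e : {t : F // t ≠ 0} ≃ {p : F × F // p.1 ^ 2 - p.2 ^ 2 = 1} :=
    { toFun := fun t => ⟨(((t : F) + (t : F)⁻¹) / 2, ((t : F) - (t : F)⁻¹) / 2), by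
        have ht : (t : F) ≠ 0 := t.2
        field_simp
        ring⟩
      invFun := fun p => ⟨p.1.1 + p.1.2, by
        intro h
        have hp := p.2
        have : ((1 : F)) = 0 := by
          rw [← hp]
          have : p.1.1 = -p.1.2 := by linear_combination h
          rw [this]; ring
        exact one_ne_zero this⟩
      left_inv := fun t => by
        have ht : (t : F) ≠ 0 := t.2
        apply Subtype.ext
        show ((t : F) + (t : F)⁻¹) / 2 + ((t : F) - (t : F)⁻¹) / 2 = (t : F)
        field_simp
        ring
      right_inv := fun p => by
        have hp := p.2
        have hinv : (p.1.1 + p.1.2)⁻¹ = p.1.1 - p.1.2 := by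
          apply inv_eq_of_mul_eq_one_right
          linear_combination hp
        apply Subtype.ext
        apply Prod.ext
        · show (p.1.1 + p.1.2 + (p.1.1 + p.1.2)⁻¹) / 2 = p.1.1
          rw [hinv]
          field_simp
          ring
        · show (p.1.1 + p.1.2 - (p.1.1 + p.1.2)⁻¹) / 2 = p.1.2
          rw [hinv]
          field_simp
          ring }
  have hAcard : A.card = q - 1 := by
    have h1 : A.card = Fintype.card {p : F × F // p.1 ^ 2 - p.2 ^ 2 = 1} :=
      (Fintype.card_subtype _).symm
    rw [h1, ← Fintype.card_congr e, ← Fintype.card_congr (unitsEquivNeZero (G₀ := F)),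
      Fintype.card_units, hq]
  -- the points with a coordinate equal to 0
  have key : ∀ a b : F, (a ^ 2 - b ^ 2 = 1 ∧ (a = 0 ∨ b = 0)) ↔
      ((a, b) = ((1 : F), (0 : F)) ∨ (a, b) = (-1, 0) ∨ (a, b) = (0, i) ∨ (a, b) = (0, -i)) := by
    intro a b
    simp only [Prod.mk.injEq]
    constructor
    · rintro ⟨h, rfl | rfl⟩
      · have hb : (b - i) * (b + i) = 0 := by linear_combination -h - hi2
        rcases mul_eq_zero.mp hb with h' | h'
        · exact Or.inr (Or.inr (Or.inl ⟨rfl, sub_eq_zero.mp h'⟩))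
        · exact Or.inr (Or.inr (Or.inr ⟨rfl, eq_neg_of_add_eq_zero_left h'⟩))
      · have ha : (a - 1) * (a + 1) = 0 := by linear_combination h
        rcases mul_eq_zero.mp ha with h' | h'
        · exact Or.inl ⟨sub_eq_zero.mp h', rfl⟩
        · exact Or.inr (Or.inl ⟨eq_neg_of_add_eq_zero_left h', rfl⟩)
    · rintro (⟨rfl, rfl⟩ | ⟨rfl, rfl⟩ | ⟨rfl, rfl⟩ | ⟨rfl, rfl⟩)
      · exact ⟨by ring, Or.inr rfl⟩
      · exact ⟨by ring, Or.inr rfl⟩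
      · exact ⟨by linear_combination -hi2, Or.inl rfl⟩
      · exact ⟨by linear_combination -hi2, Or.inl rfl⟩
  have hBeq : A.filter (fun p => ¬(p.1 ≠ 0 ∧ p.2 ≠ 0)) =
      ({((1 : F), (0 : F)), (-1, 0), (0, i), (0, -i)} : Finset (F × F)) := by
    ext ⟨a, b⟩
    simp only [hA_def, mem_filter, mem_univ, true_and, mem_insert, mem_singleton,
      not_and_or, not_not]
    rw [← key a b]
  have hBcard : ({((1 : F), (0 : F)), (-1, 0), (0, i), (0, -i)} : Finset (F × F)).card = 4 := by
    have h1 : ((1 : F), (0 : F)) ∉ ({(-1, 0), (0, i), (0, -i)} : Finset (F × F)) := by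
      simp only [mem_insert, mem_singleton, Prod.mk.injEq]
      push_neg
      refine ⟨fun h => absurd h.symm hm1, fun h => absurd h one_ne_zero,
        fun h => absurd h one_ne_zero⟩
    have h2' : ((-1 : F), (0 : F)) ∉ ({(0, i), (0, -i)} : Finset (F × F)) := by
      simp only [mem_insert, mem_singleton, Prod.mk.injEq]
      push_neg
      refine ⟨fun h => absurd h (neg_ne_zero.mpr (one_ne_zero (α := F))), fun h => absurd h (neg_ne_zero.mpr (one_ne_zero (α := F)))⟩
    have h3' : ((0 : F), i) ∉ ({(0, -i)} : Finset (F × F)) := by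
      simp only [mem_singleton, Prod.mk.injEq, not_and]
      intro _
      exact hne i hine
    rw [card_insert_of_notMem h1, card_insert_of_notMem h2', card_insert_of_notMem h3',
      card_singleton]
  set A' : Finset (F × F) := A.filter (fun p => p.1 ≠ 0 ∧ p.2 ≠ 0) with hA'_def
  have hsplit : A'.card + 4 = q - 1 := by
    rw [← hAcard, ← hBcard, ← hBeq]
    exact card_filter_add_card_filter_not _
  -- fiberwise count over the target set
  set T : Finset F :=
    univ.filter (fun x : F => (x ≠ 0 ∧ IsSquare x) ∧ (x + 1 ≠ 0 ∧ IsSquare (x + 1))) with hT_def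
  have hmap : ∀ p ∈ A', (fun p : F × F => p.2 ^ 2) p ∈ T := by
    rintro ⟨a, b⟩ hp
    simp only [hA'_def, hA_def, mem_filter, mem_univ, true_and] at hp
    obtain ⟨heq, ha, hb⟩ := hp
    simp only [hT_def, mem_filter, mem_univ, true_and]
    refine ⟨⟨pow_ne_zero 2 hb, b, pow_two b⟩, ?_, ?_⟩
    · intro h
      have : a ^ 2 = 0 := by linear_combination heq + h
      exact ha (pow_eq_zero_iff two_ne_zero |>.mp this)
    · refine ⟨a, ?_⟩
      linear_combination -heq
  have hfib : ∀ x ∈ T, (A'.filter (fun p => p.2 ^ 2 = x)).card = 4 := by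
    intro x hx
    simp only [hT_def, mem_filter, mem_univ, true_and] at hx
    obtain ⟨⟨hx0, u, hu⟩, hx10, v, hv⟩ := hx
    have hu0 : u ≠ 0 := by rintro rfl; rw [mul_zero] at hu; exact hx0 hu
    have hv0 : v ≠ 0 := by rintro rfl; rw [mul_zero] at hv; exact hx10 hv
    have hfe : A'.filter (fun p => p.2 ^ 2 = x) =
        ({(v, u), (-v, u), (v, -u), (-v, -u)} : Finset (F × F)) := by
      ext ⟨a, b⟩
      simp only [hA'_def, hA_def, mem_filter, mem_univ, true_and, mem_insert, mem_singleton,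
        Prod.mk.injEq]
      constructor
      · rintro ⟨⟨heq, ha, hb⟩, hbx⟩
        have hbu : (b - u) * (b + u) = 0 := by linear_combination hbx + hu
        have hav : (a - v) * (a + v) = 0 := by linear_combination heq + hbx + hv
        rcases mul_eq_zero.mp hav with h' | h' <;> rcases mul_eq_zero.mp hbu with h'' | h''
        · exact Or.inl ⟨sub_eq_zero.mp h', sub_eq_zero.mp h''⟩
        · exact Or.inr (Or.inr (Or.inl ⟨sub_eq_zero.mp h', eq_neg_of_add_eq_zero_left h''⟩))
        · exact Or.inr (Or.inl ⟨eq_neg_of_add_eq_zero_left h', sub_eq_zero.mp h''⟩)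
        · exact Or.inr (Or.inr (Or.inr ⟨eq_neg_of_add_eq_zero_left h',
            eq_neg_of_add_eq_zero_left h''⟩))
      · rintro (⟨rfl, rfl⟩ | ⟨rfl, rfl⟩ | ⟨rfl, rfl⟩ | ⟨rfl, rfl⟩) <;>
          refine ⟨⟨by linear_combination hu - hv, ?_, ?_⟩, by linear_combination -hu⟩ <;>
          first
            | exact hv0
            | exact hu0
            | exact neg_ne_zero.mpr hv0
            | exact neg_ne_zero.mpr hu0
    rw [hfe]
    have hvv : v ≠ -v := hne v hv0
    have huu : u ≠ -u := hne u hu0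
    have m1 : (v, u) ∉ ({(-v, u), (v, -u), (-v, -u)} : Finset (F × F)) := by
      simp only [mem_insert, mem_singleton, Prod.mk.injEq]
      push_neg
      exact ⟨fun h => absurd h hvv, fun _ => huu, fun h => absurd h hvv⟩
    have m2 : ((-v : F), u) ∉ ({(v, -u), (-v, -u)} : Finset (F × F)) := by
      simp only [mem_insert, mem_singleton, Prod.mk.injEq]
      push_neg
      exact ⟨fun h => absurd h.symm hvv, fun _ => huu⟩
    have m3 : ((v : F), -u) ∉ ({(-v, -u)} : Finset (F × F)) := by
      simp only [mem_singleton, Prod.mk.injEq, not_and]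
      intro h
      exact absurd h hvv
    rw [card_insert_of_notMem m1, card_insert_of_notMem m2, card_insert_of_notMem m3,
      card_singleton]
  have hcount : A'.card = 4 * T.card := by
    rw [card_eq_sum_card_fiberwise hmap, Finset.sum_congr rfl hfib, Finset.sum_const,
      smul_eq_mul, mul_comm]
  have hNat : Nat.card {x : F // (x ≠ 0 ∧ IsSquare x) ∧ (x + 1 ≠ 0 ∧ IsSquare (x + 1))} =
      T.card := by
    rw [Nat.card_eq_fintype_card, hT_def, Fintype.card_subtype]
  have hq2 : 2 ≤ q := by rw [← hq]; exact Fintype.one_lt_card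
  rw [hNat]
  omega
end

section
/- Let q be an odd prime power with q ≡ 3 (mod 4). In the finite field F_q, the number of elements x such that x is a nonzero nonsquare and x+1 is a nonzero square equals (q-3)/4, and the number of x such that x is a nonzero square and x+1 is a nonzero nonsquare equals (q+1)/4. -/
/-!
Write `χ` for the quadratic character of `F`. For `ε, δ = ±1` and `x ≠ 0, -1` the product
`(1 + ε χ x) (1 + δ χ (x + 1))` is `4` when `χ x = ε` and `χ (x + 1) = δ`, and `0` otherwise.
Summing it over `F` gives `#F` from the constant term, `0` from the two linear terms, and
`ε δ χ(-1) J(χ, χ) = -ε δ` from the quadratic one, since the Jacobi sum is `J(χ, χ) = -χ(-1)`;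
the two boundary points contribute `2 + δ + ε χ(-1)`. When `#F ≡ 3 (mod 4)`, `χ(-1) = -1`.
-/

open Finset

lemma Int.one_add_mul_eq_ite {a ε : ℤ} (ha : a = 1 ∨ a = -1) (hε : ε = 1 ∨ ε = -1) :
    1 + ε * a = if a = ε then 2 else 0 := by
  rcases ha with rfl | rfl <;> rcases hε with rfl | rfl <;> rfl

section QuadraticChar

variable {F : Type*} [Field F] [Fintype F] [DecidableEq F]

lemma quadraticChar_eq_one_iff {x : F} : quadraticChar F x = 1 ↔ x ≠ 0 ∧ IsSquare x := by
  refine ⟨fun h ↦ ?_, fun ⟨hx, hsq⟩ ↦ (quadraticChar_one_iff_isSquare hx).2 hsq⟩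
  have hx : x ≠ 0 := by rintro rfl; simp at h
  exact ⟨hx, (quadraticChar_one_iff_isSquare hx).1 h⟩

lemma quadraticChar_eq_neg_one_iff {x : F} :
    quadraticChar F x = -1 ↔ x ≠ 0 ∧ ¬IsSquare x := by
  rw [quadraticChar_neg_one_iff_not_isSquare]
  exact ⟨fun h ↦ ⟨by rintro rfl; exact h .zero, h⟩, And.right⟩

lemma quadraticChar_neg_one_of_card_mod_four (h4 : Fintype.card F % 4 = 3) :
    quadraticChar F (-1) = -1 :=
  quadraticChar_neg_one_iff_not_isSquare.2 fun h ↦ FiniteField.isSquare_neg_one_iff.1 h h4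

lemma sum_quadraticChar_mul_quadraticChar_add_one (hF : ringChar F ≠ 2) :
    ∑ x : F, quadraticChar F x * quadraticChar F (x + 1) = -1 := by
  set χ := quadraticChar F
  have hJ : jacobiSum χ χ = -χ (-1) := by
    simpa only [(quadraticChar_isQuadratic F).inv] using
      jacobiSum_nontrivial_inv (quadraticChar_ne_one hF)
  calc ∑ x : F, χ x * χ (x + 1) = ∑ y : F, χ (-y) * χ (-y + 1) :=
        (Equiv.sum_comp (Equiv.neg F) fun x ↦ χ x * χ (x + 1)).symm
    _ = χ (-1) * jacobiSum χ χ := by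
        rw [jacobiSum, mul_sum]
        refine sum_congr rfl fun y _ ↦ ?_
        rw [neg_eq_neg_one_mul y, map_mul, ← neg_eq_neg_one_mul, neg_add_eq_sub, mul_assoc]
    _ = -1 := by
        rw [hJ, mul_neg, ← sq, quadraticChar_sq_one (neg_ne_zero.2 one_ne_zero)]

lemma sum_quadraticChar_add_one (hF : ringChar F ≠ 2) :
    ∑ x : F, quadraticChar F (x + 1) = 0 :=
  (Equiv.sum_comp (Equiv.addRight 1) (quadraticChar F)).trans (quadraticChar_sum_zero hF)

lemma one_add_mul_quadraticChar_mul_eq (ε δ : ℤ) (hε : ε = 1 ∨ ε = -1) (hδ : δ = 1 ∨ δ = -1)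
    (x : F) :
    (1 + ε * quadraticChar F x) * (1 + δ * quadraticChar F (x + 1)) =
      (if quadraticChar F x = ε ∧ quadraticChar F (x + 1) = δ then 4 else 0) +
      (if x = 0 then 1 + δ else 0) + (if x = -1 then 1 + ε * quadraticChar F (-1) else 0) := by
  have hε0 : ε ≠ 0 := by rintro rfl; norm_num at hε
  have hδ0 : δ ≠ 0 := by rintro rfl; norm_num at hδ
  by_cases hx : x = 0
  · subst hx
    simp [hε0.symm, eq_neg_iff_add_eq_zero]
  by_cases hx' : x = -1
  · subst hx'
    simp [hδ0.symm, hx]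
  have hx1 : x + 1 ≠ 0 := fun h ↦ hx' (eq_neg_of_add_eq_zero_left h)
  rw [Int.one_add_mul_eq_ite (quadraticChar_dichotomy hx) hε,
    Int.one_add_mul_eq_ite (quadraticChar_dichotomy hx1) hδ, if_neg hx, if_neg hx']
  split_ifs <;> simp_all

theorem four_mul_card_quadraticChar_eq (hF : ringChar F ≠ 2) (ε δ : ℤ) (hε : ε = 1 ∨ ε = -1)
    (hδ : δ = 1 ∨ δ = -1) :
    4 * (#{x : F | quadraticChar F x = ε ∧ quadraticChar F (x + 1) = δ} : ℤ) =
      Fintype.card F - 2 - δ - ε * quadraticChar F (-1) - ε * δ := by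
  have hexpand : ∑ x : F, (1 + ε * quadraticChar F x) * (1 + δ * quadraticChar F (x + 1)) =
      Fintype.card F + ε * ∑ x, quadraticChar F x + δ * ∑ x, quadraticChar F (x + 1) +
        ε * δ * ∑ x, quadraticChar F x * quadraticChar F (x + 1) := by
    rw [Fintype.card_eq_sum_ones, Nat.cast_sum, mul_sum, mul_sum, mul_sum, ← sum_add_distrib,
      ← sum_add_distrib, ← sum_add_distrib]
    exact sum_congr rfl fun x _ ↦ by push_cast; ring
  have hsplit := sum_congr rfl fun (x : F) (_ : x ∈ univ) ↦
    one_add_mul_quadraticChar_mul_eq ε δ hε hδ x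
  rw [hexpand, quadraticChar_sum_zero hF, sum_quadraticChar_add_one hF,
    sum_quadraticChar_mul_quadraticChar_add_one hF, sum_add_distrib, sum_add_distrib,
    sum_ite_eq', sum_ite_eq', ← sum_filter, sum_const, nsmul_eq_mul] at hsplit
  simp only [mem_univ, if_true] at hsplit
  linarith

end QuadraticChar

theorem stmt_5_general (q : ℕ) (F : Type*) [Field F] [Fintype F]
    (hq : Fintype.card F = q) (h4 : q % 4 = 3) :
    Nat.card {x : F // (x ≠ 0 ∧ ¬ IsSquare x) ∧ (x + 1 ≠ 0 ∧ IsSquare (x + 1))} =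
      (q - 3) / 4 ∧
    Nat.card {x : F // (x ≠ 0 ∧ IsSquare x) ∧ (x + 1 ≠ 0 ∧ ¬ IsSquare (x + 1))} =
      (q + 1) / 4 := by
  classical
  have hF : ringChar F ≠ 2 := fun h ↦ by
    have := FiniteField.even_card_iff_char_two.1 h
    omega
  have hχ := quadraticChar_neg_one_of_card_mod_four (hq ▸ h4)
  have h₁ := four_mul_card_quadraticChar_eq hF (-1) 1 (by norm_num) (by norm_num)
  have h₂ := four_mul_card_quadraticChar_eq hF 1 (-1) (by norm_num) (by norm_num)
  simp only [← quadraticChar_eq_one_iff, ← quadraticChar_eq_neg_one_iff, Nat.card_eq_fintype_card,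
    Fintype.card_subtype]
  rw [hχ, hq] at h₁ h₂
  constructor <;> omega

theorem stmt_5 (q : ℕ) (F : Type*) [Field F] [Fintype F]
    (hq : Fintype.card F = q) (hodd : Odd q) (h4 : q % 4 = 3) :
    Nat.card {x : F // (x ≠ 0 ∧ ¬ IsSquare x) ∧ (x + 1 ≠ 0 ∧ IsSquare (x + 1))} =
      (q - 3) / 4 ∧
    Nat.card {x : F // (x ≠ 0 ∧ IsSquare x) ∧ (x + 1 ≠ 0 ∧ ¬ IsSquare (x + 1))} =
      (q + 1) / 4 :=
  stmt_5_general q F hq h4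
end

section
/- Let q be an odd prime power with q ≡ 3 (mod 4), and let F = F_q. Every element x of F such that both x and x+1 are nonzero squares can be written as x = ((α^t - α^{-t})/2)^2 for some integer t with 1 ≤ t ≤ (q-3)/4, where α is a fixed primitive root (generator of the multiplicative group) of F. -/
/-!
If `x = y ^ 2` and `x + 1 = z ^ 2`, then `u = y + z` is a unit with `u⁻¹ = z - y`, so
`x = ((u - u⁻¹) / 2) ^ 2`. Write `u = α ^ s`. For `q = 4 j + 3` the generator satisfies
`α ^ (2 j + 1) = -1`, so `t ↦ ((α ^ t - α ^ (-t)) / 2) ^ 2` is even and `(2 j + 1)`-periodic;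
hence `s` can be folded into `[0, j]`, and `s ≠ 0` because `x ≠ 0`.
-/

theorem Units.pow_eq_neg_one_of_orderOf_eq_two_mul {R : Type*} [CommRing R] [IsDomain R]
    {a : Rˣ} {n : ℕ} (hn : n ≠ 0) (ha : orderOf a = 2 * n) : a ^ n = -1 := by
  have hprim : IsPrimitiveRoot (a : R) (2 * n) :=
    IsPrimitiveRoot.coe_units_iff.mpr (ha ▸ IsPrimitiveRoot.orderOf a)
  have hsq : IsPrimitiveRoot ((a : R) ^ n) 2 := by
    simpa [hn] using hprim.pow_of_dvd hn (Dvd.intro_left 2 rfl)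
  ext
  simpa using hsq.eq_neg_one_of_two_right

theorem Function.Periodic.exists_eq_of_even {β : Type*} {f : ℤ → β} {c : ℤ}
    (hper : Function.Periodic f c) (heven : ∀ t, f (-t) = f t) (hc : 0 < c) (s : ℤ) :
    ∃ t, 0 ≤ t ∧ 2 * t ≤ c ∧ f t = f s := by
  have hmod : f (s % c) = f s := by
    simpa only [Int.cast_id, Int.emod_add_ediv_mul] using (hper.int_mul (s / c) (s % c)).symm
  have hr := Int.emod_nonneg s hc.ne'
  have hr' := Int.emod_lt_of_pos s hc
  by_cases hle : 2 * (s % c) ≤ c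
  · exact ⟨s % c, hr, hle, hmod⟩
  · exact ⟨c - s % c, by omega, by omega, by rw [hper.sub_eq', heven, hmod]⟩

section HalfDiffSq

variable {F : Type*} [Field F]

def halfDiffSq (u : Fˣ) : F := (((u : F) - ((u⁻¹ : Fˣ) : F)) / 2) ^ 2

@[simp]
theorem halfDiffSq_one : halfDiffSq (1 : Fˣ) = 0 := by
  simp [halfDiffSq]

theorem halfDiffSq_inv (u : Fˣ) : halfDiffSq u⁻¹ = halfDiffSq u := by
  simp only [halfDiffSq, inv_inv]
  ring

theorem halfDiffSq_neg (u : Fˣ) : halfDiffSq (-u) = halfDiffSq u := by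
  simp only [halfDiffSq, inv_neg, Units.val_neg]
  ring

theorem halfDiffSq_mkOfMulEqOne (h2 : (2 : F) ≠ 0) {y z : F} (h : (y + z) * (z - y) = 1) :
    halfDiffSq (Units.mkOfMulEqOne _ _ h) = y ^ 2 := by
  have hinv : (((Units.mkOfMulEqOne _ _ h)⁻¹ : Fˣ) : F) = z - y := rfl
  rw [halfDiffSq, hinv, Units.val_mkOfMulEqOne]
  congr 1
  field_simp
  ring

theorem halfDiffSq_zpow_periodic {a : Fˣ} {n : ℤ} (ha : a ^ n = -1) :
    Function.Periodic (fun t : ℤ => halfDiffSq (a ^ t)) n := by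
  intro t
  simp only [zpow_add, ha, mul_neg_one, halfDiffSq_neg]

theorem exists_halfDiffSq_eq_of_isSquare (h2 : (2 : F) ≠ 0) {x : F} (hx : IsSquare x)
    (hx1 : IsSquare (x + 1)) : ∃ u : Fˣ, halfDiffSq u = x := by
  obtain ⟨y, rfl⟩ := hx
  obtain ⟨z, hz⟩ := hx1
  have h : (y + z) * (z - y) = 1 := by linear_combination -hz
  exact ⟨Units.mkOfMulEqOne _ _ h, by rw [halfDiffSq_mkOfMulEqOne h2 h, sq]⟩

end HalfDiffSq

theorem stmt_8_general (q : ℕ) (F : Type*) [Field F] [Fintype F]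
    (hq : Fintype.card F = q) (h4 : q % 4 = 3)
    (α : Fˣ) (hα : ∀ y : Fˣ, y ∈ Subgroup.zpowers α)
    (x : F) (hx0 : x ≠ 0) (hxs : IsSquare x)
    (hx1s : IsSquare (x + 1)) :
    ∃ t : ℤ, 1 ≤ t ∧ t ≤ ((q - 3) / 4 : ℕ) ∧
      x = ((((α ^ t : Fˣ) : F) - ((α ^ (-t) : Fˣ) : F)) / 2) ^ 2 := by
  obtain ⟨j, rfl⟩ : ∃ j, q = 4 * j + 3 := ⟨q / 4, by omega⟩
  have h2 : (2 : F) ≠ 0 :=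
    Ring.two_ne_zero fun h => by have := FiniteField.even_card_iff_char_two.mp h; omega
  have hord : orderOf α = 2 * (2 * j + 1) := by
    rw [orderOf_eq_card_of_forall_mem_zpowers hα, Nat.card_units, Nat.card_eq_fintype_card, hq]
    omega
  have hneg : α ^ ((2 * j + 1 : ℕ) : ℤ) = -1 := by
    rw [zpow_natCast]
    exact Units.pow_eq_neg_one_of_orderOf_eq_two_mul (by omega) hord
  have hper := halfDiffSq_zpow_periodic hneg
  obtain ⟨u, hu⟩ := exists_halfDiffSq_eq_of_isSquare h2 hxs hx1s
  obtain ⟨s, hs⟩ := Subgroup.mem_zpowers_iff.mp (hα u)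
  obtain ⟨t, ht0, htj, ht⟩ := hper.exists_eq_of_even
    (fun t => by simp only [zpow_neg, halfDiffSq_inv]) (by omega) s
  simp only [hs, hu] at ht
  have ht1 : t ≠ 0 := by rintro rfl; simp [← ht] at hx0
  refine ⟨t, by omega, by push_cast; omega, ?_⟩
  rw [← ht, halfDiffSq, zpow_neg]

theorem stmt_8 (q : ℕ) (F : Type*) [Field F] [Fintype F]
    (hq : Fintype.card F = q) (hodd : Odd q) (h4 : q % 4 = 3)
    (α : Fˣ) (hα : ∀ y : Fˣ, y ∈ Subgroup.zpowers α)
    (x : F) (hx0 : x ≠ 0) (hxs : IsSquare x)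
    (hx10 : x + 1 ≠ 0) (hx1s : IsSquare (x + 1)) :
    ∃ t : ℤ, 1 ≤ t ∧ t ≤ ((q - 3) / 4 : ℕ) ∧
      x = ((((α ^ t : Fˣ) : F) - ((α ^ (-t) : Fˣ) : F)) / 2) ^ 2 :=
  stmt_8_general q F hq h4 α hα x hx0 hxs hx1s
end

section
/- Let p be an odd prime with p ≡ 3 (mod 4), n odd, k a divisor of n, and d = (p^n+1)/(p^k+1) + (p^n-1)/2. For the power function f(x) = x^d on F_{p^n}, the number of solutions x ∈ F_{p^n} of f(x+1) - f(x) = 1 equals (p^k+1)/4. -/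
open Finset

-- (r^(2i+1)+1)/(r+1) exists and is odd
lemma aux1 (r : ℕ) (hr : r % 2 = 1) : ∀ i : ℕ, ∃ m, m % 2 = 1 ∧ m * (r + 1) = r ^ (2 * i + 1) + 1 := by
  intro i
  induction i with
  | zero => exact ⟨1, rfl, by norm_num⟩
  | succ i ih =>
    obtain ⟨m, hm1, hm2⟩ := ih
    refine ⟨m + (r - 1) * r ^ (2 * i + 1), ?_, ?_⟩
    · have h2 : (r - 1) % 2 = 0 := by omega
      have : ((r - 1) * r ^ (2 * i + 1)) % 2 = 0 := by
        rw [Nat.mul_mod, h2, zero_mul, Nat.zero_mod]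
      omega
    · have hr1 : 1 ≤ r := by omega
      have key : (r - 1) * (r + 1) = r * r - 1 := by
        obtain ⟨R, rfl⟩ : ∃ R, r = R + 1 := ⟨r - 1, by omega⟩
        rw [show (R + 1) * (R + 1) = (R + 1 - 1) * (R + 1 + 1) + 1 by simp; ring]
        omega
      have e1 : (m + (r - 1) * r ^ (2 * i + 1)) * (r + 1)
          = (r ^ (2 * i + 1) + 1) + (r * r - 1) * r ^ (2 * i + 1) := by
        rw [add_mul, hm2, mul_right_comm, key]
      rw [e1]
      have hX : 1 ≤ r ^ (2 * i + 1) := Nat.one_le_pow _ _ (by omega)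
      have e2 : r ^ (2 * (i + 1) + 1) = r * r * r ^ (2 * i + 1) := by ring
      have e3 : (r * r - 1) * r ^ (2 * i + 1) = r * r * r ^ (2 * i + 1) - r ^ (2 * i + 1) := by
        rw [Nat.sub_mul, one_mul]
      have hle : r ^ (2 * i + 1) ≤ r * r * r ^ (2 * i + 1) :=
        Nat.le_mul_of_pos_left _ (by positivity)
      omega

lemma aux2 (r : ℕ) (hr : r % 2 = 1) : ∀ i : ℕ, ∃ w, w % 2 = 1 ∧ w * (r - 1) = r ^ (2 * i + 1) - 1 := by
  intro i
  induction i with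
  | zero => exact ⟨1, rfl, by norm_num⟩
  | succ i ih =>
    obtain ⟨w, hw1, hw2⟩ := ih
    refine ⟨w + (r + 1) * r ^ (2 * i + 1), ?_, ?_⟩
    · have h2 : (r + 1) % 2 = 0 := by omega
      have : ((r + 1) * r ^ (2 * i + 1)) % 2 = 0 := by
        rw [Nat.mul_mod, h2, zero_mul, Nat.zero_mod]
      omega
    · have hr1 : 1 ≤ r := by omega
      have key : (r + 1) * (r - 1) = r * r - 1 := by
        obtain ⟨R, rfl⟩ : ∃ R, r = R + 1 := ⟨r - 1, by omega⟩
        rw [show (R + 1) * (R + 1) = (R + 1 + 1) * (R + 1 - 1) + 1 by simp; ring]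
        omega
      have e1 : (w + (r + 1) * r ^ (2 * i + 1)) * (r - 1)
          = (r ^ (2 * i + 1) - 1) + (r * r - 1) * r ^ (2 * i + 1) := by
        rw [add_mul, hw2, mul_right_comm, key]
      rw [e1]
      have hX : 1 ≤ r ^ (2 * i + 1) := Nat.one_le_pow _ _ (by omega)
      have e2 : r ^ (2 * (i + 1) + 1) = r * r * r ^ (2 * i + 1) := by ring
      have e3 : (r * r - 1) * r ^ (2 * i + 1) = r * r * r ^ (2 * i + 1) - r ^ (2 * i + 1) := by
        rw [Nat.sub_mul, one_mul]
      have hle : r ^ (2 * i + 1) ≤ r * r * r ^ (2 * i + 1) :=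
        Nat.le_mul_of_pos_left _ (by positivity)
      omega

lemma aux3 (p : ℕ) (hp4 : p % 4 = 3) {k : ℕ} (hk : Odd k) : p ^ k % 4 = 3 := by
  obtain ⟨i, rfl⟩ := hk
  induction i with
  | zero => simpa using hp4
  | succ i ih =>
    have : p ^ (2 * (i + 1) + 1) = p ^ (2 * i + 1) * (p * p) := by ring
    rw [this, Nat.mul_mod, ih, Nat.mul_mod p p 4, hp4]



lemma card_pow_eq_one (K : Type*) [Field K] [Fintype K] [DecidableEq K] {t : ℕ}
    (ht : 0 < t) (htd : t ∣ Fintype.card K - 1) :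
    #{x : K | x ^ t = 1} = t := by
  have hcard : Fintype.card Kˣ = Fintype.card K - 1 := by
    rw [Fintype.card_units]
  -- transfer to Kˣ
  have htrans : #{x : K | x ^ t = 1} = #{u : Kˣ | u ^ t = 1} := by
    refine (Finset.card_bij (fun (u : Kˣ) _ => (u : K)) ?_ ?_ ?_).symm
    · intro u hu
      simp only [mem_filter, mem_univ, true_and] at hu ⊢
      rw [← Units.val_pow_eq_pow_val, hu, Units.val_one]
    · intro a ha b hb h
      exact Units.ext h
    · intro x hx
      simp only [mem_filter, mem_univ, true_and] at hx
      have hx0 : x ≠ 0 := by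
        rintro rfl
        rw [zero_pow ht.ne'] at hx
        exact one_ne_zero hx.symm
      refine ⟨Units.mk0 x hx0, ?_, rfl⟩
      simp only [mem_filter, mem_univ, true_and]
      ext
      rw [Units.val_pow_eq_pow_val, Units.val_mk0, hx, Units.val_one]
  rw [htrans]
  refine le_antisymm (IsCyclic.card_pow_eq_one_le ht) ?_
  obtain ⟨g, hg⟩ := IsCyclic.exists_generator (α := Kˣ)
  have horderg : orderOf g = Fintype.card K - 1 := by
    rw [orderOf_eq_card_of_forall_mem_zpowers hg, Nat.card_eq_fintype_card, hcard]
  set N := Fintype.card K - 1 with hN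
  have hN0 : 0 < N := by
    obtain ⟨c, hc⟩ := htd
    have := Fintype.card_pos (α := Kˣ)
    omega
  set a := g ^ (N / t) with ha
  have horda : orderOf a = t := by
    rw [ha, orderOf_pow, horderg]
    have hdvd : N / t ∣ N := Nat.div_dvd_of_dvd htd
    rw [Nat.gcd_eq_right hdvd]
    exact Nat.div_div_self htd hN0.ne'
  refine Finset.le_card_of_inj_on_range (a ^ ·) ?_ ?_
  · intro i hi
    simp only [mem_filter, mem_univ, true_and]
    rw [← pow_mul, mul_comm, pow_mul, ← horda, pow_orderOf_eq_one, one_pow]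
  · intro i hi j hj hij
    exact pow_injOn_Iio_orderOf (by rwa [Set.mem_Iio, horda]) (by rwa [Set.mem_Iio, horda]) hij

theorem stmt_10 (p n k : ℕ) (hp : p.Prime) (hp4 : p % 4 = 3)
    (hn : Odd n) (hk : 0 < k) (hkn : k ∣ n)
    (d : ℕ) (hd : d = (p ^ n + 1) / (p ^ k + 1) + (p ^ n - 1) / 2)
    (F : Type*) [Field F] [Fintype F] (hF : Fintype.card F = p ^ n) :
    Nat.card {x : F // (x + 1) ^ d - x ^ d = 1} = (p ^ k + 1) / 4 := by
  classical
  haveI : Fact p.Prime := ⟨hp⟩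
  obtain ⟨j, hj⟩ := hkn
  have hkodd : Odd k := (Nat.odd_mul.mp (hj ▸ hn)).1
  have hjodd : Odd j := (Nat.odd_mul.mp (hj ▸ hn)).2
  set q := p ^ n with hqdef
  set r := p ^ k with hrdef
  have hqr : q = r ^ j := by rw [hqdef, hrdef, ← pow_mul, hj]
  have hr4 : r % 4 = 3 := aux3 p hp4 hkodd
  have hq4 : q % 4 = 3 := aux3 p hp4 hn
  have hr3 : 3 ≤ r := by omega
  have hq3 : 3 ≤ q := by omega
  have hp3 : 3 ≤ p := by
    rcases Nat.lt_or_ge p 3 with h | h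
    · interval_cases p <;> omega
    · exact h
  -- arithmetic quantities
  obtain ⟨i, hi⟩ := hjodd
  obtain ⟨m, hmodd, hm⟩ := aux1 r (by omega) i
  rw [← hi, ← hqr] at hm
  obtain ⟨w, hwodd, hw⟩ := aux2 r (by omega) i
  rw [← hi, ← hqr] at hw
  set s := (r - 1) / 2 with hsdef
  have hs2 : 2 * s = r - 1 := by omega
  have hsodd : s % 2 = 1 := by omega
  have hs0 : 0 < s := by omega
  set c := (q - 1) / 2 with hcdef
  have hc2 : 2 * c = q - 1 := by omega
  have hcodd : c % 2 = 1 := by omega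
  set h := (r + 1) / 2 with hhdef
  have hh2 : 2 * h = r + 1 := by omega
  have hdm : d = m + c := by
    rw [hd]
    congr 1
    exact Nat.div_eq_of_eq_mul_left (by omega) hm.symm
  have hm1 : 1 ≤ m := by omega
  have hcsw : c = s * w := by
    have h2 : 2 * c = 2 * (s * w) := by
      rw [hc2, ← hw, show 2 * (s * w) = (2 * s) * w by ring, hs2, mul_comm]
    omega
  have hdeven : d % 2 = 0 := by omega
  have hd2 : 2 ≤ d := by omega
  have key1 : d * (r + 1) = 2 + (q - 1) * (1 + h) := by
    have e2 : c * (r + 1) = (q - 1) * h := by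
      rw [← hh2, ← hc2]; ring
    have e1 : d * (r + 1) = m * (r + 1) + c * (r + 1) := by rw [hdm]; ring
    have e3 : (q - 1) * (1 + h) = (q - 1) + (q - 1) * h := by ring
    omega
  -- integer versions
  have hmz : (m : ℤ) * (r + 1) = q + 1 := by exact_mod_cast hm
  have hwz : (w : ℤ) * ((r : ℤ) - 1) = (q : ℤ) - 1 := by
    have h1 : (1:ℕ) ≤ r := by omega
    have h2 : (1:ℕ) ≤ q := by omega
    zify [h1, h2] at hw
    exact hw
  have hs2z : (2 : ℤ) * s = (r : ℤ) - 1 := by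
    have h1 : (1:ℕ) ≤ r := by omega
    zify [h1] at hs2
    exact hs2
  have hmw : (m : ℤ) - 1 = (s : ℤ) * ((w : ℤ) - m) := by
    have h2 : (2:ℤ) * ((m:ℤ) - 1) = 2 * ((s:ℤ) * ((w:ℤ) - m)) := by
      linear_combination hmz - hwz - ((w : ℤ) - m) * hs2z
    have := mul_left_cancel₀ (by norm_num : (2:ℤ) ≠ 0) h2
    exact this
  have hrm : ((r : ℤ) - 1) ∣ ((m : ℤ) - 1) := by
    obtain ⟨t, ht⟩ : (2:ℤ) ∣ ((w:ℤ) - m) := by omega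
    exact ⟨t, by linear_combination hmw + (s:ℤ) * ht + t * hs2z⟩
  have hrmn : (r - 1) ∣ (m - 1) := by
    have h1 : (1:ℕ) ≤ r := by omega
    have h2 : ((r - 1 : ℕ) : ℤ) ∣ ((m - 1 : ℕ) : ℤ) := by push_cast [h1, hm1]; exact hrm
    exact_mod_cast h2
  have hd1 : d - 1 = (m - 1) + c := by omega
  have key2 : s ∣ d - 1 := by
    rw [hd1, hcsw]
    exact dvd_add (dvd_trans ⟨2, by omega⟩ hrmn) (dvd_mul_right s w)
  have key3 : ∀ e : ℕ, e ∣ d - 1 → e ∣ q - 1 → e ∣ s := by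
    intro e he1 he2
    have hd1' : (1:ℕ) ≤ d := by omega
    have hq1' : (1:ℕ) ≤ q := by omega
    have hr1' : (1:ℕ) ≤ r := by omega
    have he1z : (e : ℤ) ∣ (d : ℤ) - 1 := by
      have := Int.natCast_dvd_natCast.mpr he1
      rwa [Nat.cast_sub hd1'] at this
    have he2z : (e : ℤ) ∣ (q : ℤ) - 1 := by
      have := Int.natCast_dvd_natCast.mpr he2
      rwa [Nat.cast_sub hq1'] at this
    have key1z : (d : ℤ) * (r + 1) = 2 + ((q : ℤ) - 1) * (1 + h) := by
      zify [hq1'] at key1; exact key1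
    have her : (e : ℤ) ∣ (r : ℤ) - 1 := by
      have hid : (r : ℤ) - 1 = ((q:ℤ) - 1) * (1 + h) - ((d:ℤ) - 1) * ((r:ℤ) + 1) := by
        linear_combination key1z
      rw [hid]
      exact dvd_sub (he2z.mul_right _) (he1z.mul_right _)
    have hern : e ∣ r - 1 := by
      have h2 : ((e : ℕ) : ℤ) ∣ ((r - 1 : ℕ) : ℤ) := by push_cast [hr1']; exact her
      exact_mod_cast h2
    have hem : e ∣ m - 1 := dvd_trans hern hrmn
    have hesw : e ∣ s * w := by
      have hsw : s * w = (d - 1) - (m - 1) := by rw [← hcsw]; omega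
      rw [hsw]
      exact Nat.dvd_sub he1 hem
    have he2s : e ∣ s * 2 := by
      have : s * 2 = r - 1 := by omega
      rw [this]; exact hern
    have hg := Nat.dvd_gcd he2s hesw
    rwa [Nat.gcd_mul_left, Nat.coprime_two_left.mpr (Nat.odd_iff.mpr hwodd), mul_one] at hg
  -- characteristic
  have hn0 : 0 < n := hn.pos
  have hcharF : CharP F p := by
    have hRC : CharP F (ringChar F) := ringChar.charP F
    obtain ⟨n', hprime, hcardeq⟩ := FiniteField.card F (ringChar F)
    have hrc : ringChar F = p := by
      have h1 : ringChar F ∣ q := by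
        rw [← hF, hcardeq]
        exact dvd_pow_self _ (by exact_mod_cast n'.ne_zero)
      have h2 : ringChar F ∣ p := hprime.dvd_of_dvd_pow (hqdef ▸ h1)
      exact (Nat.prime_dvd_prime_iff_eq hprime hp).mp h2
    rwa [hrc] at hRC
  haveI := hcharF
  have hp2 : (2 : F) ≠ 0 := by
    intro h2
    have h3 : ((2 : ℕ) : F) = 0 := by exact_mod_cast h2
    have h4 := (CharP.cast_eq_zero_iff F p 2).mp h3
    have := Nat.le_of_dvd (by norm_num) h4
    omega
  have hq1F : ∀ x : F, x ≠ 0 → x ^ (q - 1) = 1 := by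
    intro x hx
    have := FiniteField.pow_card_sub_one_eq_one x hx
    rwa [hF] at this
  have frobk : ∀ x y : F, (x + y) ^ r = x ^ r + y ^ r := by
    intro x y
    exact add_pow_char_pow x y p k
  have frobk' : ∀ x y : F, (x - y) ^ r = x ^ r - y ^ r := by
    intro x y
    exact sub_pow_char_pow x y k
  have h2r : (2 : F) ^ r = 2 := by
    have := frobk 1 1
    norm_num at this
    exact this
  have hfix : ∀ y : F, y ^ (r - 1) = 1 → y ^ r = y := by
    intro y hy
    have : y ^ r = y ^ (r - 1) * y := by
      rw [← pow_succ, show r - 1 + 1 = r by omega]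
    rw [this, hy, one_mul]
  have hfix' : ∀ y : F, y ≠ 0 → y ^ r = y → y ^ (r - 1) = 1 := by
    intro y hy0 hy
    have : y ^ (r - 1) * y = 1 * y := by
      rw [← pow_succ, show r - 1 + 1 = r by omega, hy, one_mul]
    exact mul_right_cancel₀ hy0 this
  have hne0 : ∀ y : F, y ^ (r - 1) = 1 → y ≠ 0 := by
    intro y hy h0
    rw [h0, zero_pow (by omega : r - 1 ≠ 0)] at hy
    exact zero_ne_one hy
  -- characterization of solutions
  have hchar_iff : ∀ x : F, ((x + 1) ^ d - x ^ d = 1) ↔ (x = 0 ∨ (x ^ s = 1 ∧ (x + 1) ^ s = 1)) := by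
    intro x
    constructor
    · intro hP
      by_cases hx0 : x = 0
      · exact Or.inl hx0
      right
      by_cases hx1 : x + 1 = 0
      · exfalso
        rw [hx1, zero_pow (by omega : d ≠ 0)] at hP
        have hxm : x = -1 := by linear_combination hx1
        rw [hxm] at hP
        rw [Even.neg_one_pow (Nat.even_iff.mpr hdeven)] at hP
        exact hp2 (by linear_combination -hP)
      have hE : (x + 1) ^ d = x ^ d + 1 := by linear_combination hP
      have hpowid : ∀ y : F, y ≠ 0 → (y ^ d) ^ (r + 1) = y ^ 2 := by
        intro y hy
        rw [← pow_mul, key1, pow_add, pow_mul, hq1F y hy, one_pow, mul_one]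
      have hu := hpowid x hx0
      have hv := hpowid (x + 1) hx1
      rw [hE] at hv
      set u := x ^ d with hudef
      have hfrob : (u + 1) ^ r = u ^ r + 1 := by
        have := frobk u 1; rwa [one_pow] at this
      have hexp : (u + 1) ^ (r + 1) = (u ^ r + 1) * (u + 1) := by
        rw [pow_succ, hfrob]
      have huru : u ^ r * u = x ^ 2 := by rw [← pow_succ, hu]
      have h2x : u ^ r + u = 2 * x := by
        have hv' : (u ^ r + 1) * (u + 1) = (x + 1) ^ 2 := by rw [← hexp, hv]
        linear_combination hv' - huru
      have hfac : (u - x) * (u ^ r - x) = 0 := by linear_combination huru - x * h2x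
      have hux : u = x := by
        rcases mul_eq_zero.mp hfac with h' | h'
        · linear_combination h'
        · linear_combination h2x - h'
      have hxd : x ^ d = x := by rw [← hudef]; exact hux
      have hx1d : (x + 1) ^ d = x + 1 := by rw [hE, hux]
      have hpows : ∀ y : F, y ≠ 0 → y ^ d = y → y ^ s = 1 := by
        intro y hy0 hyd
        have hyd1 : y ^ (d - 1) = 1 := by
          have : y ^ (d - 1) * y = 1 * y := by
            rw [← pow_succ, show d - 1 + 1 = d by omega, hyd, one_mul]
          exact mul_right_cancel₀ hy0 this
        have h1 : orderOf y ∣ d - 1 := orderOf_dvd_of_pow_eq_one hyd1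
        have h2 : orderOf y ∣ q - 1 := orderOf_dvd_of_pow_eq_one (hq1F y hy0)
        exact orderOf_dvd_iff_pow_eq_one.mp (key3 _ h1 h2)
      exact ⟨hpows x hx0 hxd, hpows (x + 1) hx1 hx1d⟩
    · rintro (rfl | ⟨h1, h2⟩)
      · rw [zero_pow (by omega : d ≠ 0), zero_add, one_pow, sub_zero]
      · have hx0 : x ≠ 0 := by
          intro h'; rw [h', zero_pow hs0.ne'] at h1; exact zero_ne_one h1
        have hx1 : x + 1 ≠ 0 := by
          intro h'; rw [h', zero_pow hs0.ne'] at h2; exact zero_ne_one h2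
        obtain ⟨t, ht⟩ := key2
        have e : ∀ y : F, y ^ s = 1 → y ^ d = y := by
          intro y hy
          rw [show d = s * t + 1 by omega, pow_succ, pow_mul, hy, one_pow, one_mul]
        rw [e x h1, e (x + 1) h2]; ring
  -- counting
  rw [Nat.card_eq_fintype_card, Fintype.card_subtype]
  set Q : Finset F := {x : F | x ^ s = 1 ∧ (x + 1) ^ s = 1} with hQ
  have hsplit : ({x : F | (x + 1) ^ d - x ^ d = 1} : Finset F) = insert (0 : F) Q := by
    ext x
    simp only [hQ, mem_filter, mem_univ, true_and, mem_insert]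
    exact hchar_iff x
  rw [hsplit, card_insert_of_notMem (by
    simp only [hQ, mem_filter, mem_univ, true_and]
    rintro ⟨h1, -⟩
    rw [zero_pow hs0.ne'] at h1
    exact zero_ne_one h1)]
  -- the pair set A
  set A : Finset (F × F) :=
    {z : F × F | z.1 ^ (r - 1) = 1 ∧ z.2 ^ (r - 1) = 1 ∧ z.2 ^ 2 = z.1 ^ 2 + 1} with hA
  have hr1e : Even (r - 1) := Nat.even_iff.mpr (by omega)
  have hsq : ∀ t : F, t ^ 2 = 1 ↔ t = 1 ∨ t = -1 := by
    intro t
    constructor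
    · intro h'
      have : (t - 1) * (t + 1) = 0 := by linear_combination h'
      rcases mul_eq_zero.mp this with h'' | h''
      · exact Or.inl (by linear_combination h'')
      · exact Or.inr (by linear_combination h'')
    · rintro (rfl | rfl) <;> ring
  have hone : (1 : F) ≠ -1 := by
    intro h'
    exact hp2 (by linear_combination h')
  -- #A = r - 3
  have hAcard : #A = r - 3 := by
    have hTcard : #({t : F | t ^ (r - 1) = 1} : Finset F) = r - 1 := by
      have hdvd : (r - 1) ∣ Fintype.card F - 1 := by
        rw [hF]
        exact ⟨w, by rw [← hw]; ring⟩
      exact card_pow_eq_one F (by omega) hdvd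
    have hsub : ({1, -1} : Finset F) ⊆ ({t : F | t ^ (r - 1) = 1} : Finset F) := by
      intro t ht
      simp only [mem_insert, mem_singleton] at ht
      simp only [mem_filter, mem_univ, true_and]
      rcases ht with rfl | rfl
      · exact one_pow _
      · exact Even.neg_one_pow hr1e
    have hT' : ({t : F | t ^ (r - 1) = 1 ∧ t ^ 2 ≠ 1} : Finset F)
        = ({t : F | t ^ (r - 1) = 1} : Finset F) \ {1, -1} := by
      ext t
      simp only [mem_filter, mem_univ, true_and, mem_sdiff, mem_insert, mem_singleton, ne_eq]
      have := hsq t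
      tauto
    have hT'card : #({t : F | t ^ (r - 1) = 1 ∧ t ^ 2 ≠ 1} : Finset F) = r - 3 := by
      rw [hT', card_sdiff_of_subset hsub, hTcard,
        card_insert_of_notMem (by simpa using hone), card_singleton]
      omega
    rw [← hT'card]
    refine Finset.card_bij' (fun z (_ : z ∈ A) => z.1 + z.2)
      (fun t (_ : t ∈ ({t : F | t ^ (r - 1) = 1 ∧ t ^ 2 ≠ 1} : Finset F)) =>
        ((t - t⁻¹) / 2, (t + t⁻¹) / 2)) ?_ ?_ ?_ ?_
    · -- i maps into T'
      intro z hz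
      simp only [hA, mem_filter, mem_univ, true_and] at hz
      obtain ⟨hz1, hz2, hz3⟩ := hz
      have hz10 : z.1 ≠ 0 := hne0 _ hz1
      have hmul : (z.2 - z.1) * (z.1 + z.2) = 1 := by linear_combination hz3
      have htne : z.1 + z.2 ≠ 0 := right_ne_zero_of_mul_eq_one hmul
      have hfr : (z.1 + z.2) ^ r = z.1 + z.2 := by
        rw [frobk, hfix _ hz1, hfix _ hz2]
      simp only [mem_filter, mem_univ, true_and]
      refine ⟨hfix' _ htne hfr, ?_⟩
      intro hsq1
      have hdiff : ((z.2 - z.1) - (z.1 + z.2)) * (z.1 + z.2) = 0 := by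
        linear_combination hmul - hsq1
      rcases mul_eq_zero.mp hdiff with h' | h'
      · have hz102 : (2 : F) * z.1 = 0 := by linear_combination -h'
        rcases mul_eq_zero.mp hz102 with h'' | h''
        · exact hp2 h''
        · exact hz10 h''
      · exact htne h'
    · -- j maps into A
      intro t ht
      simp only [mem_filter, mem_univ, true_and] at ht
      obtain ⟨ht1, ht2⟩ := ht
      have ht0 : t ≠ 0 := hne0 _ ht1
      have htr : t ^ r = t := hfix _ ht1
      have htinvr : (t⁻¹) ^ r = t⁻¹ := by rw [inv_pow, htr]
      have har : ((t - t⁻¹) / 2) ^ r = (t - t⁻¹) / 2 := by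
        rw [div_pow, frobk', htr, htinvr, h2r]
      have hbr : ((t + t⁻¹) / 2) ^ r = (t + t⁻¹) / 2 := by
        rw [div_pow, frobk, htr, htinvr, h2r]
      have ha0 : (t - t⁻¹) / 2 ≠ 0 := by
        intro h0
        have h1 : t - t⁻¹ = 0 := by
          rcases div_eq_zero_iff.mp h0 with h' | h'
          · exact h'
          · exact absurd h' hp2
        have h5 : (t - t⁻¹) * t = 0 := by rw [h1, zero_mul]
        have h6 : t⁻¹ * t = 1 := inv_mul_cancel₀ ht0
        exact ht2 (by linear_combination h5 + h6)
      have hb0 : (t + t⁻¹) / 2 ≠ 0 := by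
        intro h0
        have h1 : t + t⁻¹ = 0 := by
          rcases div_eq_zero_iff.mp h0 with h' | h'
          · exact h'
          · exact absurd h' hp2
        have h5 : (t + t⁻¹) * t = 0 := by rw [h1, zero_mul]
        have h6 : t⁻¹ * t = 1 := inv_mul_cancel₀ ht0
        have h7 : t ^ 2 = -1 := by linear_combination h5 - h6
        have h8 : t ^ (r - 1) = -1 := by
          rw [show r - 1 = 2 * s from hs2.symm, pow_mul, h7,
            Odd.neg_one_pow (Nat.odd_iff.mpr hsodd)]
        rw [ht1] at h8
        exact hone h8
      simp only [hA, mem_filter, mem_univ, true_and]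
      refine ⟨hfix' _ ha0 har, hfix' _ hb0 hbr, ?_⟩
      have h6 : t⁻¹ * t = 1 := inv_mul_cancel₀ ht0
      field_simp
      ring
    · -- left inverse
      intro z hz
      simp only [hA, mem_filter, mem_univ, true_and] at hz
      obtain ⟨hz1, hz2, hz3⟩ := hz
      have hmul : (z.2 - z.1) * (z.1 + z.2) = 1 := by linear_combination hz3
      have hinv : (z.1 + z.2)⁻¹ = z.2 - z.1 := inv_eq_of_mul_eq_one_left hmul
      have hcomp1 : (z.1 + z.2 - (z.1 + z.2)⁻¹) / 2 = z.1 := by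
        rw [hinv]
        field_simp
        ring
      have hcomp2 : (z.1 + z.2 + (z.1 + z.2)⁻¹) / 2 = z.2 := by
        rw [hinv]
        field_simp
        ring
      exact Prod.ext hcomp1 hcomp2
    · -- right inverse
      intro t ht
      simp only [mem_filter, mem_univ, true_and] at ht
      have ht0 : t ≠ 0 := hne0 _ ht.1
      field_simp
      ring
  -- #A = 4 * #Q
  have hfour : #A = 4 * #Q := by
    have Hmap : ∀ z ∈ A, z.1 ^ 2 ∈ Q := by
      intro z hz
      simp only [hA, mem_filter, mem_univ, true_and] at hz
      obtain ⟨hz1, hz2, hz3⟩ := hz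
      simp only [hQ, mem_filter, mem_univ, true_and]
      constructor
      · rw [← pow_mul, hs2, hz1]
      · rw [← hz3, ← pow_mul, hs2, hz2]
    have fibercard : ∀ x ∈ Q, #(A.filter fun z => z.1 ^ 2 = x) = 4 := by
      intro x hx
      simp only [hQ, mem_filter, mem_univ, true_and] at hx
      obtain ⟨hx1, hx2⟩ := hx
      set a0 := x ^ ((s + 1) / 2) with ha0def
      set b0 := (x + 1) ^ ((s + 1) / 2) with hb0def
      have hs1 : (s + 1) / 2 * 2 = s + 1 := by omega
      have ha0sq : a0 ^ 2 = x := by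
        rw [ha0def, ← pow_mul, hs1, pow_succ, hx1, one_mul]
      have hb0sq : b0 ^ 2 = x + 1 := by
        rw [hb0def, ← pow_mul, hs1, pow_succ, hx2, one_mul]
      have ha0r : a0 ^ (r - 1) = 1 := by
        rw [show r - 1 = 2 * s from hs2.symm, pow_mul, ha0sq, hx1]
      have hb0r : b0 ^ (r - 1) = 1 := by
        rw [show r - 1 = 2 * s from hs2.symm, pow_mul, hb0sq, hx2]
      have ha00 : a0 ≠ 0 := hne0 _ ha0r
      have hb00 : b0 ≠ 0 := hne0 _ hb0r
      have hkey : A.filter (fun z => z.1 ^ 2 = x)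
          = {(a0, b0), (a0, -b0), (-a0, b0), (-a0, -b0)} := by
        ext z
        simp only [mem_filter, hA, mem_univ, true_and, mem_insert, mem_singleton,
          Prod.ext_iff]
        constructor
        · rintro ⟨⟨hz1, hz2, hz3⟩, hz4⟩
          have hza : z.1 = a0 ∨ z.1 = -a0 := by
            have h' : (z.1 - a0) * (z.1 + a0) = 0 := by linear_combination hz4 - ha0sq
            rcases mul_eq_zero.mp h' with h'' | h''
            · exact Or.inl (by linear_combination h'')
            · exact Or.inr (by linear_combination h'')
          have hzb : z.2 = b0 ∨ z.2 = -b0 := by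
            have h' : (z.2 - b0) * (z.2 + b0) = 0 := by
              linear_combination hz3 + hz4 - hb0sq
            rcases mul_eq_zero.mp h' with h'' | h''
            · exact Or.inl (by linear_combination h'')
            · exact Or.inr (by linear_combination h'')
          rcases hza with h1 | h1 <;> rcases hzb with h2 | h2
          · exact Or.inl ⟨h1, h2⟩
          · exact Or.inr (Or.inl ⟨h1, h2⟩)
          · exact Or.inr (Or.inr (Or.inl ⟨h1, h2⟩))
          · exact Or.inr (Or.inr (Or.inr ⟨h1, h2⟩))
        · intro hz
          have hcases : (z.1 = a0 ∨ z.1 = -a0) ∧ (z.2 = b0 ∨ z.2 = -b0) := by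
            rcases hz with ⟨h1, h2⟩ | ⟨h1, h2⟩ | ⟨h1, h2⟩ | ⟨h1, h2⟩
            · exact ⟨Or.inl h1, Or.inl h2⟩
            · exact ⟨Or.inl h1, Or.inr h2⟩
            · exact ⟨Or.inr h1, Or.inl h2⟩
            · exact ⟨Or.inr h1, Or.inr h2⟩
          obtain ⟨h1, h2⟩ := hcases
          have e1 : z.1 ^ (r - 1) = 1 := by
            rcases h1 with h' | h' <;> rw [h']
            · exact ha0r
            · rw [Even.neg_pow hr1e]; exact ha0r
          have e2 : z.2 ^ (r - 1) = 1 := by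
            rcases h2 with h' | h' <;> rw [h']
            · exact hb0r
            · rw [Even.neg_pow hr1e]; exact hb0r
          have e4 : z.1 ^ 2 = x := by
            rcases h1 with h' | h' <;> rw [h']
            · exact ha0sq
            · rw [neg_sq]; exact ha0sq
          have e3 : z.2 ^ 2 = z.1 ^ 2 + 1 := by
            rw [e4]
            rcases h2 with h' | h' <;> rw [h']
            · rw [hb0sq]
            · rw [neg_sq, hb0sq]
          exact ⟨⟨e1, e2, e3⟩, e4⟩
      rw [hkey]
      have hne1 : a0 ≠ -a0 := by
        intro h'
        have h2' : (2 : F) * a0 = 0 := by linear_combination h'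
        rcases mul_eq_zero.mp h2' with h'' | h''
        · exact hp2 h''
        · exact ha00 h''
      have hne2 : b0 ≠ -b0 := by
        intro h'
        have h2' : (2 : F) * b0 = 0 := by linear_combination h'
        rcases mul_eq_zero.mp h2' with h'' | h''
        · exact hp2 h''
        · exact hb00 h''
      rw [card_insert_of_notMem (by simp [Prod.ext_iff, hne1, hne2]),
        card_insert_of_notMem (by simp [Prod.ext_iff, hne1, hne2]),
        card_insert_of_notMem (by simp [Prod.ext_iff, hne1, hne2]), card_singleton]
    rw [Finset.card_eq_sum_card_fiberwise Hmap, Finset.sum_congr rfl fibercard,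
      Finset.sum_const, smul_eq_mul, mul_comm]
  omega
end

section
/- Let p ≡ 3 (mod 4) be an odd prime, n odd, and k | n. Then gcd((p^k+1)/2, p^n - 1) = 2, and consequently the map y ↦ y^{(p^k+1)/2} on F_{p^n}^* is two-to-one onto the set of nonzero squares. -/
theorem stmt_17 (p n k : ℕ) (hp : p.Prime) (hp4 : p % 4 = 3)
    (hn : Odd n) (hk : 0 < k) (hkn : k ∣ n)
    (F : Type*) [Field F] [Fintype F] (hF : Fintype.card F = p ^ n) :
    Nat.gcd ((p ^ k + 1) / 2) (p ^ n - 1) = 2 ∧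
    (∀ y : F, y ≠ 0 → y ^ ((p ^ k + 1) / 2) ≠ 0 ∧ IsSquare (y ^ ((p ^ k + 1) / 2))) ∧
    (∀ c : F, c ≠ 0 → IsSquare c →
      Nat.card {y : F // y ≠ 0 ∧ y ^ ((p ^ k + 1) / 2) = c} = 2) := by
  obtain ⟨t, rfl⟩ := hkn
  have hkt : Odd k ∧ Odd t := (Nat.odd_mul).mp hn
  -- powers of p mod 4
  have hodd_pow : ∀ j : ℕ, Odd j → p ^ j % 4 = 3 := by
    intro j hj
    obtain ⟨i, rfl⟩ := hj
    rw [Nat.pow_mod, hp4, pow_succ, pow_mul]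
    rw [Nat.mul_mod, Nat.pow_mod]
    norm_num
  have hA4 : p ^ k % 4 = 3 := hodd_pow k hkt.1
  have hB4 : p ^ (k * t) % 4 = 3 := hodd_pow (k * t) hn
  have hBpos : 1 ≤ p ^ (k * t) := Nat.one_le_pow _ _ hp.pos
  set m := (p ^ k + 1) / 2 with hm
  have hm2 : 2 * m = p ^ k + 1 := by omega
  have hmeven : 2 ∣ m := by omega
  have hmpos : 0 < m := by omega
  -- divisibility p^k+1 ∣ p^(kt)+1
  have hdvd : p ^ k + 1 ∣ p ^ (k * t) + 1 := by
    rw [pow_mul]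
    simpa using hkt.2.nat_add_dvd_pow_add_pow (p ^ k) 1
  set N := p ^ (k * t) - 1 with hN
  -- gcd = 2
  have hgcd : Nat.gcd m N = 2 := by
    have h1 : Nat.gcd m N ∣ 2 := by
      have hgm : Nat.gcd m N ∣ p ^ (k * t) + 1 :=
        ((Nat.gcd_dvd_left m N).trans (⟨2, by omega⟩ : m ∣ p ^ k + 1)).trans hdvd
      have hgN : Nat.gcd m N ∣ N := Nat.gcd_dvd_right m N
      have := Nat.dvd_sub hgm hgN
      have heq : p ^ (k * t) + 1 - N = 2 := by omega
      rwa [heq] at this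
    have h2 : 2 ∣ Nat.gcd m N := Nat.dvd_gcd hmeven (by omega)
    exact Nat.dvd_antisymm h1 h2
  refine ⟨hgcd, ?_, ?_⟩
  · intro y hy
    refine ⟨pow_ne_zero m hy, ?_⟩
    obtain ⟨s, hs⟩ := hmeven
    exact ⟨y ^ s, by rw [hs, two_mul, pow_add]⟩
  · intro c hc hsq
    classical
    obtain ⟨x, hx⟩ := hsq
    have hx0 : x ≠ 0 := by rintro rfl; simp at hx; exact hc hx
    -- work in units
    have hcardU : Fintype.card Fˣ = N := by
      rw [Fintype.card_units, hF]
    have hupow : ∀ u : Fˣ, u ^ N = 1 := fun u => by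
      rw [← hcardU]; exact pow_card_eq_one
    set A := Nat.gcdA m N with hA
    set B := Nat.gcdB m N with hB'
    have hbez : (2 : ℤ) = (m : ℤ) * A + (N : ℤ) * B := by
      have := Nat.gcd_eq_gcd_ab m N
      rw [hgcd] at this
      exact_mod_cast this
    have key : ∀ u : Fˣ, (u ^ m) ^ A = u ^ 2 := by
      intro u
      have : u ^ ((m : ℤ) * A + (N : ℤ) * B) = u ^ (2 : ℤ) := by
        rw [← hbez]
      rw [zpow_add, zpow_mul, zpow_mul, zpow_natCast, zpow_natCast, hupow u,
        one_zpow, mul_one] at this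
      rw [this]
      norm_cast
    set xu : Fˣ := Units.mk0 x hx0 with hxu
    set b : Fˣ := xu ^ A with hb
    have hbm : b ^ m = xu ^ 2 := by
      rw [hb, ← zpow_natCast (xu ^ A) m, ← zpow_mul, mul_comm, zpow_mul, zpow_natCast]
      exact key xu
    set v : F := (b : F) with hv
    have hv0 : v ≠ 0 := b.ne_zero
    have hvm : v ^ m = c := by
      have := congrArg (Units.val) hbm
      push_cast at this
      rw [hv, this, hxu]
      simpa [sq] using hx.symm
    -- char ≠ 2
    have htwo : (2 : F) ≠ 0 := by
      intro h2
      have hpF : ((p : ℕ) : F) = 0 := by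
        have h0 : ((Fintype.card F : ℕ) : F) = 0 := FiniteField.cast_card_eq_zero F
        rw [hF] at h0
        push_cast at h0
        exact pow_eq_zero_iff (Nat.mul_pos hk hkt.2.pos).ne' |>.mp h0
      obtain ⟨j, hj⟩ : ∃ j, p = 2 * j + 1 := ⟨p / 2, by omega⟩
      rw [hj] at hpF
      push_cast at hpF
      rw [h2] at hpF
      simp at hpF
    have hvne : v ≠ -v := by
      intro h
      have : (2 : F) * v = 0 := by linear_combination h
      exact hv0 ((mul_eq_zero.mp this).resolve_left htwo)
    -- set equality
    have hset : {y : F | y ≠ 0 ∧ y ^ m = c} = {v, -v} := by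
      ext y
      simp only [Set.mem_setOf_eq, Set.mem_insert_iff, Set.mem_singleton_iff]
      constructor
      · rintro ⟨hy0, hym⟩
        set yu : Fˣ := Units.mk0 y hy0 with hyu
        have hum : yu ^ m = b ^ m := by
          apply Units.ext
          push_cast
          show y ^ m = v ^ m
          rw [hym, hvm]
        have hu2 : yu ^ 2 = b ^ 2 := by
          rw [← key yu, ← key b, hum]
        have hy2 : y ^ 2 = v ^ 2 := by
          have := congrArg (Units.val) hu2
          push_cast at this
          exact this
        have : (y - v) * (y + v) = 0 := by linear_combination hy2
        rcases mul_eq_zero.mp this with h | h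
        · left; exact sub_eq_zero.mp h
        · right; exact eq_neg_of_add_eq_zero_left h
      · rintro (rfl | rfl)
        · exact ⟨hv0, hvm⟩
        · refine ⟨neg_ne_zero.mpr hv0, ?_⟩
          rw [Even.neg_pow ⟨m / 2, by omega⟩, hvm]
    -- count
    have e : {y : F // y ≠ 0 ∧ y ^ m = c} ≃ ({v, -v} : Set F) :=
      Equiv.setCongr hset
    rw [Nat.card_congr e, Nat.card_coe_set_eq, Set.ncard_pair hvne]
end

section
/- Let p be an odd prime, n, k positive integers with e = gcd(n,k) and k/e odd, and d = (p^k+1)/2. For f(x) = x^d on F_{p^n}, the set of b such that f(x+1) - f(x) = b has a solution with x a nonzero square and x+1 a nonzero square is disjoint from the set of b such that f(x+1) - f(x) = b has a solution with x a nonzero nonsquare and x+1 a nonzero nonsquare, when p^n ≡ 3 (mod 4). -/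
/-- Powers of a number congruent to 3 mod 4. -/
lemma stmt19_mod4pow (a j : ℕ) (ha : a % 4 = 3) :
    a ^ j % 4 = if Odd j then 3 else 1 := by
  induction j with
  | zero => simp
  | succ i ih =>
    rw [pow_succ, Nat.mul_mod, ih, ha]
    rcases Nat.even_or_odd i with hi | hi
    · have h1 : Odd (i + 1) := Even.add_one hi
      have h2 : ¬ Odd i := Nat.not_odd_iff_even.mpr hi
      simp [h1, h2]
    · have h1 : ¬ Odd (i + 1) := by
        rw [Nat.odd_add_one]
        exact not_not_intro hi
      simp [hi, h1]

/-- Key algebraic identity: if `u^2 - v^2 = 1` in a field of odd characteristic `p`,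
then `2 * (u^(p^j+1) - v^(p^j+1)) = w + w⁻¹` for some nonzero square `w`. -/
lemma stmt19_key {F : Type*} [Field F] (p j : ℕ) [Fact p.Prime] [CharP F p]
    (hpodd : Odd p) (u v : F) (h : u ^ 2 - v ^ 2 = 1) :
    ∃ w : F, IsSquare w ∧ w ≠ 0 ∧
      2 * (u ^ (p ^ j + 1) - v ^ (p ^ j + 1)) = w + w⁻¹ := by
  have hp2 : (2 : F) ≠ 0 := by
    have h2 : ((2 : ℕ) : F) ≠ 0 := by
      rw [Ne, CharP.cast_eq_zero_iff F p 2]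
      intro hdvd
      have hpeq := (Nat.prime_dvd_prime_iff_eq (Fact.out) Nat.prime_two).mp hdvd
      have := Nat.odd_iff.mp hpodd
      omega
    simpa using h2
  have hmodd : Odd (p ^ j) := hpodd.pow
  have hm1 : 0 < p ^ j := pow_pos (Nat.Prime.pos Fact.out) j
  set M : ℕ := p ^ j - 1 with hMdef
  have hmM : p ^ j = M + 1 := by omega
  have hMeven : M % 2 = 0 := by
    have := Nat.odd_iff.mp hmodd
    omega
  have hst : (u + v) * (u - v) = 1 := by linear_combination h
  have hs0 : u + v ≠ 0 := left_ne_zero_of_mul_eq_one hst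
  have h2m : (2 : F) ^ p ^ j = 2 := by
    have h1 := add_pow_char_pow (1 : F) 1 p j
    norm_num at h1
    exact h1
  have hu2 : 2 * u ^ (p ^ j) = (u + v) ^ (p ^ j) + (u - v) ^ (p ^ j) := by
    have h1 : ((2 : F) * u) ^ (p ^ j)
        = (u + v) ^ (p ^ j) + (u - v) ^ (p ^ j) := by
      rw [show (2 : F) * u = (u + v) + (u - v) by ring]
      exact add_pow_char_pow (u + v) (u - v) p j
    calc 2 * u ^ (p ^ j) = (2 : F) ^ (p ^ j) * u ^ (p ^ j) := by rw [h2m]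
      _ = ((2 : F) * u) ^ (p ^ j) := (mul_pow _ _ _).symm
      _ = (u + v) ^ (p ^ j) + (u - v) ^ (p ^ j) := h1
  have hv2 : 2 * v ^ (p ^ j) = (u + v) ^ (p ^ j) - (u - v) ^ (p ^ j) := by
    have h1 : ((2 : F) * v) ^ (p ^ j)
        = (u + v) ^ (p ^ j) - (u - v) ^ (p ^ j) := by
      rw [show (2 : F) * v = (u + v) - (u - v) by ring]
      exact sub_pow_char_pow (u + v) (u - v) j
    calc 2 * v ^ (p ^ j) = (2 : F) ^ (p ^ j) * v ^ (p ^ j) := by rw [h2m]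
      _ = ((2 : F) * v) ^ (p ^ j) := (mul_pow _ _ _).symm
      _ = (u + v) ^ (p ^ j) - (u - v) ^ (p ^ j) := h1
  rw [hmM] at hu2 hv2 ⊢
  have main : 2 * (u ^ (M + 1 + 1) - v ^ (M + 1 + 1))
      = (u + v) ^ M + (u - v) ^ M := by
    linear_combination u * hu2 - v * hv2 + ((u + v) ^ M + (u - v) ^ M) * hst
  refine ⟨(u + v) ^ M, ?_, pow_ne_zero _ hs0, ?_⟩
  · exact ⟨(u + v) ^ (M / 2), by rw [← pow_add]; congr 1; omega⟩
  · have hinv : ((u + v) ^ M)⁻¹ = (u - v) ^ M := by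
      apply inv_eq_of_mul_eq_one_right
      rw [← mul_pow, hst, one_pow]
    rw [hinv]
    exact main

theorem stmt_19 (p n k e : ℕ) (hp : p.Prime) (hpodd : Odd p)
    (hn : 0 < n) (hk : 0 < k) (he : e = Nat.gcd n k) (hke : Odd (k / e))
    (h4 : p ^ n % 4 = 3) (d : ℕ) (hd : d = (p ^ k + 1) / 2)
    (F : Type*) [Field F] [Fintype F] (hF : Fintype.card F = p ^ n) :
    ∀ b : F, ¬ ((∃ x : F, x ≠ 0 ∧ IsSquare x ∧ x + 1 ≠ 0 ∧ IsSquare (x + 1) ∧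
        (x + 1) ^ d - x ^ d = b) ∧
      (∃ x : F, x ≠ 0 ∧ ¬ IsSquare x ∧ x + 1 ≠ 0 ∧ ¬ IsSquare (x + 1) ∧
        (x + 1) ^ d - x ^ d = b)) := by
  classical
  -- characteristic of F is p
  haveI hfact : Fact p.Prime := ⟨hp⟩
  have hchar' : CharP F (ringChar F) := ringChar.charP F
  have hprime : (ringChar F).Prime := CharP.char_is_prime F (ringChar F)
  obtain ⟨m', _, hm'⟩ := FiniteField.card F (ringChar F)
  have hdvd : p ∣ (ringChar F) ^ (m' : ℕ) := by
    rw [← hm', hF]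
    exact dvd_pow_self p hn.ne'
  have hpq : p = ringChar F :=
    (Nat.prime_dvd_prime_iff_eq hp hprime).mp (hp.dvd_of_dvd_pow hdvd)
  haveI hcharp : CharP F p := hpq ▸ hchar'
  -- numerical facts
  have hp4 : p % 4 = 3 := by
    have h1 : p % 2 = 1 := Nat.odd_iff.mp hpodd
    have h2 : p % 4 % 2 = p % 2 := Nat.mod_mod_of_dvd p (by norm_num)
    have h3 : p ^ n % 4 = (p % 4) ^ n % 4 := Nat.pow_mod p n 4
    by_contra hne
    have hone : p % 4 = 1 := by omega
    rw [hone, one_pow] at h3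
    omega
  have hnodd : Odd n := by
    by_contra hne
    rw [stmt19_mod4pow p n hp4, if_neg hne] at h4
    omega
  have heodd : Odd e := by
    rcases Nat.even_or_odd e with he' | he'
    · exfalso
      have h2e : (2 : ℕ) ∣ n := dvd_trans he'.two_dvd (he ▸ Nat.gcd_dvd_left n k)
      have := Nat.odd_iff.mp hnodd
      omega
    · exact he'
  have hkodd : Odd k := by
    have hek : e ∣ k := he ▸ Nat.gcd_dvd_right n k
    have hkk : k = e * (k / e) := (Nat.mul_div_cancel' hek).symm
    rw [hkk]
    exact heodd.mul hke
  have hmk4 : p ^ k % 4 = 3 := by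
    rw [stmt19_mod4pow p k hp4, if_pos hkodd]
  have h2d : 2 * d = p ^ k + 1 := by omega
  have hdeven : Even d := by
    rw [Nat.even_iff]
    omega
  -- -1 is not a square
  have hneg1 : ¬ IsSquare (-1 : F) := by
    intro hsq
    exact (FiniteField.isSquare_neg_one_iff.mp hsq) (by rw [hF]; exact h4)
  have negs : ∀ a : F, a ≠ 0 → ¬ IsSquare a → IsSquare (-a) := by
    intro a ha hna
    have h1 : quadraticChar F (-1) = -1 :=
      quadraticChar_neg_one_iff_not_isSquare.mpr hneg1
    have h2 : quadraticChar F a = -1 :=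
      quadraticChar_neg_one_iff_not_isSquare.mpr hna
    have h3 : quadraticChar F (-a) = 1 := by
      rw [show (-a : F) = (-1) * a by ring, map_mul, h1, h2]
      ring
    exact (quadraticChar_one_iff_isSquare (neg_ne_zero.mpr ha)).mp h3
  rintro b ⟨⟨x, hx0, hxsq, hx10, hx1sq, hxb⟩, ⟨y, hy0, hynsq, hy10, hy1nsq, hyb⟩⟩
  -- case 00
  obtain ⟨r1, hr1⟩ := hx1sq
  obtain ⟨r2, hr2⟩ := hxsq
  have hsub : r1 ^ 2 - r2 ^ 2 = 1 := by
    rw [pow_two, pow_two, ← hr1, ← hr2]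
    ring
  obtain ⟨w1, hw1sq, hw10, hkey1⟩ := stmt19_key p k hpodd r1 r2 hsub
  have hb1 : 2 * b = w1 + w1⁻¹ := by
    rw [← hxb]
    have e1 : (x + 1) ^ d = r1 ^ (p ^ k + 1) := by
      rw [hr1, ← pow_two, ← pow_mul, ← h2d, mul_comm]
    have e2 : x ^ d = r2 ^ (p ^ k + 1) := by
      rw [hr2, ← pow_two, ← pow_mul, ← h2d, mul_comm]
    rw [e1, e2]
    exact hkey1
  -- case 11
  obtain ⟨r3, hr3⟩ := negs y hy0 hynsq
  obtain ⟨r4, hr4⟩ := negs _ hy10 hy1nsq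
  have hsub2 : r3 ^ 2 - r4 ^ 2 = 1 := by
    rw [pow_two, pow_two, ← hr3, ← hr4]
    ring
  obtain ⟨w2, hw2sq, hw20, hkey2⟩ := stmt19_key p k hpodd r3 r4 hsub2
  have hb2 : 2 * b = -(w2 + w2⁻¹) := by
    rw [← hyb]
    have e3 : y ^ d = r3 ^ (p ^ k + 1) := by
      have hy' : y = -(r3 * r3) := by rw [← hr3]; ring
      rw [hy', hdeven.neg_pow, ← pow_two, ← pow_mul, ← h2d, mul_comm]
    have e4 : (y + 1) ^ d = r4 ^ (p ^ k + 1) := by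
      have hy' : y + 1 = -(r4 * r4) := by rw [← hr4]; ring
      rw [hy', hdeven.neg_pow, ← pow_two, ← pow_mul, ← h2d, mul_comm]
    rw [e3, e4]
    linear_combination -hkey2
  -- combine
  have hz0 : (-w2 : F) ≠ 0 := neg_ne_zero.mpr hw20
  have hznsq : ¬ IsSquare (-w2 : F) := by
    intro hzsq
    apply hneg1
    have hzz : (-1 : F) = -w2 * w2⁻¹ := by
      field_simp
    rw [hzz]
    exact hzsq.mul hw2sq.inv
  have heq : w1 + w1⁻¹ = -w2 + (-w2)⁻¹ := by
    rw [inv_neg]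
    linear_combination hb2 - hb1
  have heq2 : w1 + w1⁻¹ + (w2 + w2⁻¹) = 0 := by
    linear_combination hb2 - hb1
  have hfac : (w1 + w2) * (w1 * w2 + 1) = 0 := by
    have hi1 : w1⁻¹ * w1 = 1 := inv_mul_cancel₀ hw10
    have hi2 : w2⁻¹ * w2 = 1 := inv_mul_cancel₀ hw20
    linear_combination (w1 * w2) * heq2 - w2 * hi1 - w1 * hi2
  rcases mul_eq_zero.mp hfac with h0 | h0
  · have hwz : w1 = -w2 := by linear_combination h0
    exact hznsq (hwz ▸ hw1sq)
  · have hwz : (-w2 : F) = w1⁻¹ := by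
      apply eq_inv_of_mul_eq_one_left
      linear_combination -h0
    exact hznsq (hwz ▸ hw1sq.inv)
end
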